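/- arXiv:1111.6558 — 7 statements merged into one kernel-verified Lean document; each statement's English description precedes it below -/
import Mathlib

section
/- Let A be an invertible n×n matrix over a field with an LU factorization A = LU where L is unit lower triangular and U is upper triangular. Then for every k with 1 ≤ k < n, the rank of the strictly lower-left block A(k+1:n, 1:k) equals the rank of L(k+1:n, 1:k), and the rank of the strictly upper-right block A(1:k, k+1:n) equals the rank of U(1:k, k+1:n). -/
open Matrix

/-- The strictly lower-left block `A(k+1:n, 1:k)` (1-based), as a matrix. -/
def lowerBlock {F : Type*} [Field F] {n : ℕ} (A : Matrix (Fin n) (Fin n) F)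
    (k : ℕ) (hk : k < n) : Matrix (Fin (n - k)) (Fin k) F :=
  Matrix.of fun i j => A ⟨k + i.1, by have := i.isLt; omega⟩ ⟨j.1, by have := j.isLt; omega⟩

/-- The strictly upper-right block `A(1:k, k+1:n)` (1-based), as a matrix. -/
def upperBlock {F : Type*} [Field F] {n : ℕ} (A : Matrix (Fin n) (Fin n) F)
    (k : ℕ) (hk : k < n) : Matrix (Fin k) (Fin (n - k)) F :=
  Matrix.of fun i j => A ⟨i.1, by have := i.isLt; omega⟩ ⟨k + j.1, by have := j.isLt; omega⟩

theorem lu_block_ranks {F : Type*} [Field F] {n : ℕ}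
    (A L U : Matrix (Fin n) (Fin n) F)
    (hAinv : IsUnit A.det)
    (hfac : A = L * U)
    (hLlow : ∀ i j : Fin n, i < j → L i j = 0)
    (hLdiag : ∀ i : Fin n, L i i = 1)
    (hUup : ∀ i j : Fin n, j < i → U i j = 0) :
    ∀ (k : ℕ) (hk1 : 1 ≤ k) (hk : k < n),
      (lowerBlock A k hk).rank = (lowerBlock L k hk).rank ∧
      (upperBlock A k hk).rank = (upperBlock U k hk).rank := by
  intro k hk1 hk
  -- U has nonzero diagonal
  have hdetU : IsUnit U.det := by
    rw [hfac, det_mul] at hAinv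
    exact isUnit_of_mul_isUnit_right hAinv
  have hUtri : U.BlockTriangular id := fun i j h => hUup i j h
  have hUdiag : ∀ i : Fin n, U i i ≠ 0 := by
    have h := hdetU.ne_zero
    rw [det_of_upperTriangular hUtri] at h
    exact fun i => Finset.prod_ne_zero_iff.mp h i (Finset.mem_univ i)
  -- top-left k×k blocks
  set U11 : Matrix (Fin k) (Fin k) F :=
    Matrix.of fun i j => U ⟨i.1, by omega⟩ ⟨j.1, by omega⟩ with hU11
  set L11 : Matrix (Fin k) (Fin k) F :=
    Matrix.of fun i j => L ⟨i.1, by omega⟩ ⟨j.1, by omega⟩ with hL11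
  have hU11tri : U11.BlockTriangular id := by
    intro i j h
    exact hUup ⟨i.1, by omega⟩ ⟨j.1, by omega⟩ h
  have hU11det : IsUnit U11.det := by
    rw [det_of_upperTriangular hU11tri]
    exact (Finset.prod_ne_zero_iff.mpr fun i _ => hUdiag ⟨i.1, by omega⟩).isUnit
  have hL11tri : L11.BlockTriangular OrderDual.toDual := by
    intro i j h
    exact hLlow ⟨i.1, by omega⟩ ⟨j.1, by omega⟩ h
  have hL11det : IsUnit L11.det := by
    rw [det_of_lowerTriangular _ hL11tri]
    simp only [hL11, Matrix.of_apply]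
    rw [Finset.prod_congr rfl fun i _ => hLdiag ⟨i.1, by omega⟩]
    simp
  constructor
  · have key : lowerBlock A k hk = lowerBlock L k hk * U11 := by
      ext i j
      have hjk : (j : ℕ) < k := j.isLt
      simp only [lowerBlock, hfac, Matrix.mul_apply, Matrix.of_apply]
      simp only [hU11, Matrix.of_apply]
      symm
      calc ∑ m : Fin k, L ⟨k + i.1, by omega⟩ ⟨m.1, by omega⟩ * U ⟨m.1, by omega⟩ ⟨j.1, by omega⟩
          = ∑ m ∈ Finset.univ.map (Fin.castLEEmb hk.le),
              L ⟨k + i.1, by omega⟩ m * U m ⟨j.1, by omega⟩ := by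
            rw [Finset.sum_map]; rfl
        _ = ∑ m : Fin n, L ⟨k + i.1, by omega⟩ m * U m ⟨j.1, by omega⟩ := by
            apply Finset.sum_subset (Finset.subset_univ _)
            intro x _ hx
            have hxk : ¬ (x : ℕ) < k := fun h =>
              hx (Finset.mem_map.2 ⟨⟨x.1, h⟩, Finset.mem_univ _, Fin.ext rfl⟩)
            have : U x ⟨j.1, by omega⟩ = 0 := hUup x ⟨j.1, by omega⟩ (by
              show (j : ℕ) < (x : ℕ); omega)
            rw [this, mul_zero]
    rw [key]
    exact rank_mul_eq_left_of_isUnit_det U11 (lowerBlock L k hk) hU11det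
  · have key : upperBlock A k hk = L11 * upperBlock U k hk := by
      ext i j
      have hik : (i : ℕ) < k := i.isLt
      simp only [upperBlock, hfac, Matrix.mul_apply, Matrix.of_apply, hL11]
      symm
      calc ∑ m : Fin k, L ⟨i.1, by omega⟩ ⟨m.1, by omega⟩ * U ⟨m.1, by omega⟩ ⟨k + j.1, by omega⟩
          = ∑ m ∈ Finset.univ.map (Fin.castLEEmb hk.le),
              L ⟨i.1, by omega⟩ m * U m ⟨k + j.1, by omega⟩ := by
            rw [Finset.sum_map]; rfl
        _ = ∑ m : Fin n, L ⟨i.1, by omega⟩ m * U m ⟨k + j.1, by omega⟩ := by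
            apply Finset.sum_subset (Finset.subset_univ _)
            intro x _ hx
            have hxk : ¬ (x : ℕ) < k := fun h =>
              hx (Finset.mem_map.2 ⟨⟨x.1, h⟩, Finset.mem_univ _, Fin.ext rfl⟩)
            have : L ⟨i.1, by omega⟩ x = 0 := hLlow ⟨i.1, by omega⟩ x (by
              show (i : ℕ) < (x : ℕ); omega)
            rw [this, zero_mul]
    rw [key]
    exact rank_mul_eq_right_of_isUnit_det L11 (upperBlock U k hk) hL11det
end

section
/- Let A be an n×n matrix, σ a scalar, and suppose A - σI = LU with L unit lower triangular and U upper triangular and invertible. Define A' = UL + σI (one step of shifted LR iteration). Then for every k with 1 ≤ k < n, rank of A'(k+1:n, 1:k) equals rank of A(k+1:n, 1:k) restricted as follows: rank A'(k+1:n,1:k) = rank L(k+1:n,1:k) and rank A'(1:k,k+1:n) = rank U(1:k,k+1:n). In particular, if A has all lower off-diagonal block ranks ≤ r^l and all upper off-diagonal block ranks ≤ r^u, then so does A'. -/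
open Matrix

/-!
With `A = L U + σ I` and `A' = U L + σ I`, the shift does not touch the off-diagonal blocks, and
since `L` and `U` are triangular, block multiplication split at `k` gives
`A'₂₁ = U₂₂ L₂₁`, `A₂₁ = L₂₁ U₁₁`, `A'₁₂ = U₁₂ L₂₂`, `A₁₂ = L₁₁ U₁₂`.
The diagonal blocks `L₁₁, L₂₂, U₁₁, U₂₂` are triangular with nonzero diagonal, hence invertible,
so `rank A'₂₁ = rank L₂₁ = rank A₂₁` and `rank A'₁₂ = rank U₁₂ = rank A₁₂`.
-/

namespace Matrix

variable {l l' m m' o o' α : Type*}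

theorem submatrix_mul_of_injective [Fintype m] [Fintype m'] [NonUnitalNonAssocSemiring α]
    (P : Matrix l m α) (M : Matrix m o α) (r : l' → l) (e : m' → m) (c : o' → o)
    (he : Function.Injective e) (hPM : ∀ i j k, j ∉ Set.range e → P (r i) j * M j (c k) = 0) :
    (P * M).submatrix r c = P.submatrix r e * M.submatrix e c := by
  ext i k
  exact (Fintype.sum_of_injective e he _ _ (hPM i · k) fun _ => rfl).symm

theorem submatrix_add_smul_one_of_ne [DecidableEq m] [Semiring α] (X : Matrix m m α) (σ : α)
    (r : l → m) (c : o → m) (hrc : ∀ i j, r i ≠ c j) :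
    (X + σ • (1 : Matrix m m α)).submatrix r c = X.submatrix r c := by
  ext i j
  simp [one_apply_ne (hrc i j)]

theorem IsUpperTriangular.submatrix_of_strictMono [LinearOrder m] [LinearOrder m'] [Zero α]
    {M : Matrix m m α} (hM : M.IsUpperTriangular) {f : m' → m} (hf : StrictMono f) :
    (M.submatrix f f).IsUpperTriangular :=
  fun _ _ hij => hM (hf hij)

theorem IsLowerTriangular.submatrix_of_strictMono [LinearOrder m] [LinearOrder m'] [Zero α]
    {M : Matrix m m α} (hM : M.IsLowerTriangular) {f : m' → m} (hf : StrictMono f) :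
    (M.submatrix f f).IsLowerTriangular :=
  fun _ _ hij => hM (hf hij)

theorem rank_mul_eq_left_of_isUpperTriangular [Fintype m] [LinearOrder m] [Field α]
    (A : Matrix m m α) (B : Matrix l m α) (hA : A.IsUpperTriangular) (hd : ∀ i, A.diag i ≠ 0) :
    (B * A).rank = B.rank :=
  rank_mul_eq_left_of_det_ne_zero A B <| by
    simpa [det_of_isUpperTriangular hA, Finset.prod_ne_zero_iff]

theorem rank_mul_eq_left_of_isLowerTriangular [Fintype m] [LinearOrder m] [Field α]
    (A : Matrix m m α) (B : Matrix l m α) (hA : A.IsLowerTriangular) (hd : ∀ i, A.diag i ≠ 0) :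
    (B * A).rank = B.rank :=
  rank_mul_eq_left_of_det_ne_zero A B <| by
    simpa [det_of_isLowerTriangular A hA, Finset.prod_ne_zero_iff]

end Matrix

section Blocks

variable {F : Type*} [Field F] {n k : ℕ}

def trailingIdx (hk : k ≤ n) (i : Fin (n - k)) : Fin n :=
  ⟨k + i, by omega⟩

theorem strictMono_trailingIdx (hk : k ≤ n) : StrictMono (trailingIdx hk) :=
  fun _ _ hij => Nat.add_lt_add_left hij k

theorem lt_trailingIdx_of_notMem_range (hk : k ≤ n) {j : Fin n}
    (hj : j ∉ Set.range (trailingIdx hk)) (i : Fin (n - k)) : j < trailingIdx hk i := by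
  by_contra! hij
  have hkj : k + (i : ℕ) ≤ j := hij
  exact hj ⟨⟨j - k, by omega⟩, Fin.ext (by simp only [trailingIdx]; omega)⟩

theorem castLE_lt_of_notMem_range (hk : k ≤ n) {j : Fin n}
    (hj : j ∉ Set.range (Fin.castLE hk)) (i : Fin k) : Fin.castLE hk i < j := by
  by_contra! hij
  have hji : (j : ℕ) ≤ i := hij
  exact hj ⟨⟨j, by omega⟩, rfl⟩

theorem lowerBlock_eq_submatrix (A : Matrix (Fin n) (Fin n) F) (hk : k < n) :
    lowerBlock A k hk = A.submatrix (trailingIdx hk.le) (Fin.castLE hk.le) :=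
  rfl

theorem upperBlock_eq_submatrix (A : Matrix (Fin n) (Fin n) F) (hk : k < n) :
    upperBlock A k hk = A.submatrix (Fin.castLE hk.le) (trailingIdx hk.le) :=
  rfl

theorem lowerBlock_add_smul_one (X : Matrix (Fin n) (Fin n) F) (σ : F) (hk : k < n) :
    lowerBlock (X + σ • (1 : Matrix (Fin n) (Fin n) F)) k hk = lowerBlock X k hk :=
  submatrix_add_smul_one_of_ne X σ _ _ fun i j h => by
    have : k + (i : ℕ) = j := congrArg Fin.val h
    omega

theorem upperBlock_add_smul_one (X : Matrix (Fin n) (Fin n) F) (σ : F) (hk : k < n) :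
    upperBlock (X + σ • (1 : Matrix (Fin n) (Fin n) F)) k hk = upperBlock X k hk :=
  submatrix_add_smul_one_of_ne X σ _ _ fun i j h => by
    have : (i : ℕ) = k + j := congrArg Fin.val h
    omega

variable {P M : Matrix (Fin n) (Fin n) F}

theorem rank_lowerBlock_mul_of_isUpperTriangular_left (hk : k < n) (hP : P.IsUpperTriangular)
    (hd : ∀ i, P.diag i ≠ 0) : (lowerBlock (P * M) k hk).rank = (lowerBlock M k hk).rank := by
  rw [lowerBlock_eq_submatrix, lowerBlock_eq_submatrix,
    submatrix_mul_of_injective P M (trailingIdx hk.le) (trailingIdx hk.le) (Fin.castLE hk.le)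
      (strictMono_trailingIdx hk.le).injective
      fun i j _ hj => mul_eq_zero_of_left (hP (lt_trailingIdx_of_notMem_range hk.le hj i)) _,
    rank_mul_eq_right_of_isUpperTriangular _ _
      (hP.submatrix_of_strictMono (strictMono_trailingIdx hk.le)) fun _ => hd _]

theorem rank_lowerBlock_mul_of_isUpperTriangular_right (hk : k < n) (hP : P.IsUpperTriangular)
    (hd : ∀ i, P.diag i ≠ 0) : (lowerBlock (M * P) k hk).rank = (lowerBlock M k hk).rank := by
  rw [lowerBlock_eq_submatrix, lowerBlock_eq_submatrix,
    submatrix_mul_of_injective M P (trailingIdx hk.le) (Fin.castLE hk.le) (Fin.castLE hk.le)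
      (Fin.castLE_injective hk.le)
      fun _ j l hj => mul_eq_zero_of_right _ (hP (castLE_lt_of_notMem_range hk.le hj l)),
    rank_mul_eq_left_of_isUpperTriangular _ _
      (hP.submatrix_of_strictMono (Fin.strictMono_castLE hk.le)) fun _ => hd _]

theorem rank_upperBlock_mul_of_isLowerTriangular_left (hk : k < n) (hP : P.IsLowerTriangular)
    (hd : ∀ i, P.diag i ≠ 0) : (upperBlock (P * M) k hk).rank = (upperBlock M k hk).rank := by
  rw [upperBlock_eq_submatrix, upperBlock_eq_submatrix,
    submatrix_mul_of_injective P M (Fin.castLE hk.le) (Fin.castLE hk.le) (trailingIdx hk.le)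
      (Fin.castLE_injective hk.le)
      fun i j _ hj => mul_eq_zero_of_left
        (hP (OrderDual.toDual_lt_toDual.2 (castLE_lt_of_notMem_range hk.le hj i))) _,
    rank_mul_eq_right_of_isLowerTriangular _ _
      (hP.submatrix_of_strictMono (Fin.strictMono_castLE hk.le)) fun _ => hd _]

theorem rank_upperBlock_mul_of_isLowerTriangular_right (hk : k < n) (hP : P.IsLowerTriangular)
    (hd : ∀ i, P.diag i ≠ 0) : (upperBlock (M * P) k hk).rank = (upperBlock M k hk).rank := by
  rw [upperBlock_eq_submatrix, upperBlock_eq_submatrix,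
    submatrix_mul_of_injective M P (Fin.castLE hk.le) (trailingIdx hk.le) (trailingIdx hk.le)
      (strictMono_trailingIdx hk.le).injective
      fun _ j l hj => mul_eq_zero_of_right _
        (hP (OrderDual.toDual_lt_toDual.2 (lt_trailingIdx_of_notMem_range hk.le hj l))),
    rank_mul_eq_left_of_isLowerTriangular _ _
      (hP.submatrix_of_strictMono (strictMono_trailingIdx hk.le)) fun _ => hd _]

end Blocks
/-- One step of shifted LR iteration preserves quasiseparable (off-diagonal block rank)
structure. -/
theorem shifted_LR_preserves_quasiseparable {F : Type*} [Field F] {n : ℕ}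
    (A L U : Matrix (Fin n) (Fin n) F) (σ : F)
    (hfac : A - σ • (1 : Matrix (Fin n) (Fin n) F) = L * U)
    (hLlow : ∀ i j : Fin n, i < j → L i j = 0)
    (hLdiag : ∀ i : Fin n, L i i = 1)
    (hUup : ∀ i j : Fin n, j < i → U i j = 0)
    (hUdiag : ∀ i : Fin n, U i i ≠ 0) :
    (∀ (k : ℕ) (hk1 : 1 ≤ k) (hk : k < n),
      (lowerBlock (U * L + σ • (1 : Matrix (Fin n) (Fin n) F)) k hk).rank
          = (lowerBlock L k hk).rank ∧
      (upperBlock (U * L + σ • (1 : Matrix (Fin n) (Fin n) F)) k hk).rank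
          = (upperBlock U k hk).rank) ∧
    (∀ rl ru : ℕ,
      (∀ (k : ℕ) (hk1 : 1 ≤ k) (hk : k < n), (lowerBlock A k hk).rank ≤ rl) →
      (∀ (k : ℕ) (hk1 : 1 ≤ k) (hk : k < n), (upperBlock A k hk).rank ≤ ru) →
      (∀ (k : ℕ) (hk1 : 1 ≤ k) (hk : k < n),
        (lowerBlock (U * L + σ • (1 : Matrix (Fin n) (Fin n) F)) k hk).rank ≤ rl ∧
        (upperBlock (U * L + σ • (1 : Matrix (Fin n) (Fin n) F)) k hk).rank ≤ ru)) := by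
  have hA : A = L * U + σ • (1 : Matrix (Fin n) (Fin n) F) := by rw [← hfac]; abel
  have hU : U.IsUpperTriangular := fun i j hij => hUup i j hij
  have hL : L.IsLowerTriangular := fun i j hij => hLlow i j hij
  have hUd : ∀ i, U.diag i ≠ 0 := hUdiag
  have hLd : ∀ i, L.diag i ≠ 0 := fun i => by simp [hLdiag]
  have hlow : ∀ k (hk : k < n), (lowerBlock (U * L + σ • 1) k hk).rank
      = (lowerBlock L k hk).rank := fun k hk => by
    rw [lowerBlock_add_smul_one, rank_lowerBlock_mul_of_isUpperTriangular_left hk hU hUd]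
  have hup : ∀ k (hk : k < n), (upperBlock (U * L + σ • 1) k hk).rank
      = (upperBlock U k hk).rank := fun k hk => by
    rw [upperBlock_add_smul_one, rank_upperBlock_mul_of_isLowerTriangular_right hk hL hLd]
  have hlowA : ∀ k (hk : k < n), (lowerBlock A k hk).rank = (lowerBlock L k hk).rank :=
    fun k hk => by
      rw [hA, lowerBlock_add_smul_one, rank_lowerBlock_mul_of_isUpperTriangular_right hk hU hUd]
  have hupA : ∀ k (hk : k < n), (upperBlock A k hk).rank = (upperBlock U k hk).rank :=
    fun k hk => by
      rw [hA, upperBlock_add_smul_one, rank_upperBlock_mul_of_isLowerTriangular_left hk hL hLd]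
  refine ⟨fun k _ hk => ⟨hlow k hk, hup k hk⟩, fun rl ru hrl hru k hk1 hk => ⟨?_, ?_⟩⟩
  · rw [hlow, ← hlowA]
    exact hrl k hk1 hk
  · rw [hup, ← hupA]
    exact hru k hk1 hk
end

section
/- Let L be the n×n unit lower bidiagonal matrix with subdiagonal entries l_1,…,l_{n-1} and U the upper bidiagonal matrix with diagonal entries u_1,…,u_n and superdiagonal entries all equal to 1. Suppose that for a shift σ the quantities defined by the tridiagonal dqds recurrence t_1 = u_1 - σ, and for k = 1,…,n-1: d̂_k = t_k + l_k, l̂_k = l_k u_{k+1} / d̂_k, t_{k+1} = t_k u_{k+1} / d̂_k - σ, with û_k = d̂_k for k < n and û_n = t_n, are well defined (all d̂_k ≠ 0). Then the matrices L̂ (unit lower bidiagonal with subdiagonal entries l̂_k) and Û (upper bidiagonal with diagonal entries û_k and unit superdiagonal) satisfy L̂ Û = U L - σ I. -/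
open Matrix

lemma sum_pred {F : Type*} [AddCommMonoid F] {n : ℕ} (f : Fin n → F) (i : Fin n) :
    (∑ k : Fin n, if (i : ℕ) = (k : ℕ) + 1 then f k else 0) =
    if h : (i : ℕ) = 0 then 0 else f ⟨(i : ℕ) - 1, by have := i.isLt; omega⟩ := by
  split_ifs with h
  · apply Finset.sum_eq_zero; intro k _; rw [if_neg]; omega
  · rw [Finset.sum_eq_single (⟨(i : ℕ) - 1, by have := i.isLt; omega⟩ : Fin n)]
    · rw [if_pos]; simp; omega
    · intro k _ hk; rw [if_neg]; intro hc; exact hk (Fin.ext (by simp; omega))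
    · simp

lemma sum_succ {F : Type*} [AddCommMonoid F] {n : ℕ} (f : Fin n → F) (i : Fin n) :
    (∑ k : Fin n, if (k : ℕ) = (i : ℕ) + 1 then f k else 0) =
    if h : (i : ℕ) + 1 < n then f ⟨(i : ℕ) + 1, h⟩ else 0 := by
  split_ifs with h
  · rw [Finset.sum_eq_single (⟨(i : ℕ) + 1, h⟩ : Fin n)]
    · rw [if_pos rfl]
    · intro k _ hk; rw [if_neg]; intro hc; exact hk (Fin.ext (by simp [hc]))
    · simp
  · apply Finset.sum_eq_zero; intro k _; rw [if_neg]; have := k.isLt; omega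


/-- Correctness of the tridiagonal dqds step: if the dqds recurrence with shift `σ`
produces well-defined (nonzero) pivots, then the produced bidiagonal factors satisfy
`L̂ Û = U L - σ I`.  (All sequences are 0-based: `l j`, `u j`, etc. denote `l_{j+1}`,
`u_{j+1}` of the 1-based description.) -/
theorem tridiagonal_dqds_correct {F : Type*} [Field F] {n : ℕ}
    (l u t dhat lhat uhat : ℕ → F) (σ : F)
    (ht0 : t 0 = u 0 - σ)
    (hdhat : ∀ k, k < n - 1 → dhat k = t k + l k)
    (hdhat_ne : ∀ k, k < n - 1 → dhat k ≠ 0)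
    (hlhat : ∀ k, k < n - 1 → lhat k = l k * u (k + 1) / dhat k)
    (ht : ∀ k, k < n - 1 → t (k + 1) = t k * u (k + 1) / dhat k - σ)
    (huhat : ∀ k, k < n - 1 → uhat k = dhat k)
    (huhat_last : uhat (n - 1) = t (n - 1)) :
    let L : Matrix (Fin n) (Fin n) F :=
      Matrix.of fun i j => if i.1 = j.1 + 1 then l j.1 else if i = j then 1 else 0
    let U : Matrix (Fin n) (Fin n) F :=
      Matrix.of fun i j => if i = j then u i.1 else if j.1 = i.1 + 1 then 1 else 0
    let Lhat : Matrix (Fin n) (Fin n) F :=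
      Matrix.of fun i j => if i.1 = j.1 + 1 then lhat j.1 else if i = j then 1 else 0
    let Uhat : Matrix (Fin n) (Fin n) F :=
      Matrix.of fun i j => if i = j then uhat i.1 else if j.1 = i.1 + 1 then 1 else 0
    Lhat * Uhat = U * L - σ • (1 : Matrix (Fin n) (Fin n) F) := by
  intro L U Lhat Uhat
  ext i j
  have hULhs : ∀ k : Fin n,
      Lhat i k * Uhat k j =
      (if (i : ℕ) = (k : ℕ) + 1 then lhat k * Uhat k j else 0) +
      (if i = k then Uhat k j else 0) := by
    intro k
    simp only [Lhat, of_apply]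
    split_ifs with h1 h2 h2
    · exfalso; subst h2; omega
    · ring
    · ring
    · ring
  have hURhs : ∀ k : Fin n,
      U i k * L k j =
      (if i = k then u (i : ℕ) * L k j else 0) +
      (if (k : ℕ) = (i : ℕ) + 1 then L k j else 0) := by
    intro k
    simp only [U, of_apply]
    split_ifs with h1 h2 h2
    · exfalso; subst h1; omega
    · ring
    · ring
    · ring
  simp only [Matrix.sub_apply, Matrix.mul_apply, Matrix.smul_apply,
    Matrix.one_apply, smul_eq_mul]
  rw [Finset.sum_congr rfl (fun k _ => hULhs k),
    Finset.sum_congr rfl (fun k _ => hURhs k),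
    Finset.sum_add_distrib, Finset.sum_add_distrib, sum_pred, sum_succ,
    Finset.sum_ite_eq Finset.univ i, Finset.sum_ite_eq Finset.univ i]
  simp only [Finset.mem_univ, if_true]
  obtain ⟨iv, hi⟩ := i
  obtain ⟨jv, hj⟩ := j
  simp only [Uhat, L, of_apply, Fin.mk.injEq, Fin.ext_iff]
  split_ifs
  all_goals try (exfalso; omega)
  all_goals try ring1
  -- G1: iv = 0 diagonal, n > 1
  · rename_i h0 hij h2 hlt h5
    subst h0; subst hij
    have hn : 0 < n - 1 := by omega
    rw [huhat 0 hn, hdhat 0 hn, ht0]; ring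
  -- G2: iv = 0 diagonal, n = 1
  · rename_i h0 hij h2 hnlt
    subst h0; subst hij
    rw [show (0 : ℕ) = n - 1 from by omega, huhat_last,
      show n - 1 = 0 from by omega, ht0]; ring
  -- G3: subdiagonal, iv + 1 < n
  · rename_i h0 hsub h2 h3 h4 h5 h6 h7
    have hj1 : jv < n - 1 := by omega
    have hne := hdhat_ne jv hj1
    rw [show iv - 1 = jv from by omega, hlhat jv hj1, huhat jv hj1,
      div_mul_cancel₀ _ hne, show jv + 1 = iv from by omega]; ring
  -- G4: subdiagonal, iv + 1 = n
  · rename_i h0 hsub h2 h3 h4 h5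
    have hj1 : jv < n - 1 := by omega
    have hne := hdhat_ne jv hj1
    rw [show iv - 1 = jv from by omega, hlhat jv hj1, huhat jv hj1,
      div_mul_cancel₀ _ hne, show jv + 1 = iv from by omega]; ring
  -- G5: diagonal, 0 < iv, iv + 1 < n
  · rename_i h0 h1 h2 hij h4 hlt h6
    subst hij
    have hm : iv - 1 < n - 1 := by omega
    have hne := hdhat_ne _ hm
    have htiv : t iv = t (iv - 1) * u iv / dhat (iv - 1) - σ := by
      have := ht (iv - 1) hm; rwa [show iv - 1 + 1 = iv from by omega] at this
    have hlh : lhat (iv - 1) = l (iv - 1) * u iv / dhat (iv - 1) := by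
      have := hlhat (iv - 1) hm; rwa [show iv - 1 + 1 = iv from by omega] at this
    have hdh := hdhat (iv - 1) hm
    have huh : uhat iv = t iv + l iv := by
      rw [huhat iv (by omega), hdhat iv (by omega)]
    rw [huh, htiv, hlh, hdh]
    rw [hdh] at hne
    field_simp
    ring
  -- G6: diagonal, 0 < iv, iv + 1 = n
  · rename_i h0 h1 h2 hij h4 hnlt
    subst hij
    have hm : iv - 1 < n - 1 := by omega
    have hne := hdhat_ne _ hm
    have htiv : t iv = t (iv - 1) * u iv / dhat (iv - 1) - σ := by
      have := ht (iv - 1) hm; rwa [show iv - 1 + 1 = iv from by omega] at this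
    have hlh : lhat (iv - 1) = l (iv - 1) * u iv / dhat (iv - 1) := by
      have := hlhat (iv - 1) hm; rwa [show iv - 1 + 1 = iv from by omega] at this
    have hdh := hdhat (iv - 1) hm
    have huh : uhat iv = t iv := by
      rw [show iv = n - 1 from by omega]; exact huhat_last
    rw [huh, htiv, hlh, hdh]
    rw [hdh] at hne
    field_simp
    ring
end

section
/- (Correctness of tridiagonal stationary qd with shift) Let L, U be as in the normalized bidiagonal setting with parameters l_k, u_k, and σ a scalar. Define û_1 = u_1 - σ and, for k ≥ 1, l̂_k = l_k u_k / û_k and û_{k+1} = l_k + u_{k+1} - σ - l̂_k, assuming all û_k ≠ 0. Then the unit lower bidiagonal matrix L̂ with subdiagonals l̂_k and the upper bidiagonal matrix Û with diagonal û_k and unit superdiagonal satisfy L̂ Û = L U - σ I. -/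
/-!
Both `L̂ Û` and `L U - σ I` are tridiagonal with unit superdiagonal, so it suffices to compare
their subdiagonals and diagonals. The product of a unit lower bidiagonal matrix with
subdiagonal `a` and an upper bidiagonal matrix with diagonal `d` and unit superdiagonal has
subdiagonal `a_k d_k` and diagonal `d_k + a_{k-1}`; the qd recurrence is exactly the requirement
`l̂_k û_k = l_k u_k` and `û_k + l̂_{k-1} = u_k + l_{k-1} - σ`.
-/

open Matrix

theorem Fin.sum_ite_val_eq_val_add_one {R : Type*} [AddCommMonoid R] {n : ℕ} (i : Fin n)
    (g : Fin n → R) :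
    ∑ k : Fin n, (if i.1 = k.1 + 1 then g k else 0) =
      if h : 0 < i.1 then g ⟨i.1 - 1, by omega⟩ else 0 := by
  split_ifs with hi
  · have hk : ∀ k : Fin n, (i.1 = k.1 + 1 ↔ (⟨i.1 - 1, by omega⟩ : Fin n) = k) := by
      intro k
      rw [Fin.ext_iff]; show _ ↔ i.1 - 1 = k.1; omega
    simp only [hk, Finset.sum_ite_eq, Finset.mem_univ, if_true]
  · exact Finset.sum_eq_zero fun k _ => if_neg (by omega)

namespace Matrix

variable {R : Type*} {n : ℕ}

/- The diagonals are sequences `ℕ → R`, of which only the entries below `n` are read. -/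

def unitLowerBidiagonal [Zero R] [One R] (a : ℕ → R) : Matrix (Fin n) (Fin n) R :=
  of fun i j => if i.1 = j.1 + 1 then a j.1 else if i = j then 1 else 0

def upperBidiagonalUnitSuper [Zero R] [One R] (d : ℕ → R) : Matrix (Fin n) (Fin n) R :=
  of fun i j => if i = j then d i.1 else if j.1 = i.1 + 1 then 1 else 0

def tridiagonal [Zero R] (sub diag super : ℕ → R) : Matrix (Fin n) (Fin n) R :=
  of fun i j =>
    if i.1 = j.1 + 1 then sub j.1 else if i = j then diag i.1 else if j.1 = i.1 + 1 then super i.1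
    else 0

theorem unitLowerBidiagonal_mul_apply [NonAssocSemiring R] (a : ℕ → R)
    (M : Matrix (Fin n) (Fin n) R) (i j : Fin n) :
    (unitLowerBidiagonal a * M : Matrix (Fin n) (Fin n) R) i j =
      M i j + if h : 0 < i.1 then a (i.1 - 1) * M ⟨i.1 - 1, by omega⟩ j else 0 := by
  have hL : ∀ k, unitLowerBidiagonal a i k =
      (if i = k then 1 else 0) + if i.1 = k.1 + 1 then a k.1 else 0 := fun k => by
    by_cases h : i.1 = k.1 + 1
    · simp [unitLowerBidiagonal, h, Fin.ext_iff]
    · simp [unitLowerBidiagonal, h]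
  simp only [mul_apply, hL, add_mul, Finset.sum_add_distrib, ite_mul, one_mul, zero_mul,
    Finset.sum_ite_eq, Finset.mem_univ, if_true, Fin.sum_ite_val_eq_val_add_one]

theorem unitLowerBidiagonal_mul_upperBidiagonalUnitSuper [NonAssocSemiring R] (a d : ℕ → R) :
    (unitLowerBidiagonal a * upperBidiagonalUnitSuper d : Matrix (Fin n) (Fin n) R) =
      tridiagonal (fun k => a k * d k) (fun k => d k + if k = 0 then 0 else a (k - 1)) 1 := by
  ext ⟨i, hi⟩ ⟨j, hj⟩
  rw [unitLowerBidiagonal_mul_apply]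
  simp only [upperBidiagonalUnitSuper, tridiagonal, of_apply, Fin.ext_iff, Pi.one_apply]
  split_ifs <;> first | omega | (subst_vars; simp)

theorem tridiagonal_sub_smul_one [Ring R] (sub diag super : ℕ → R) (σ : R) :
    (tridiagonal sub diag super - σ • 1 : Matrix (Fin n) (Fin n) R) =
      tridiagonal sub (fun k => diag k - σ) super := by
  ext i j
  simp only [tridiagonal, sub_apply, smul_apply, one_apply, of_apply, smul_eq_mul, Fin.ext_iff]
  split_ifs <;> first | omega | simp

theorem tridiagonal_congr [Zero R] {sub sub' diag diag' super super' : ℕ → R}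
    (hsub : ∀ k, k + 1 < n → sub k = sub' k) (hdiag : ∀ k, k < n → diag k = diag' k)
    (hsuper : ∀ k, k + 1 < n → super k = super' k) :
    (tridiagonal sub diag super : Matrix (Fin n) (Fin n) R) = tridiagonal sub' diag' super' := by
  ext i j
  simp only [tridiagonal, of_apply]
  split_ifs
  · exact hsub _ (by omega)
  · exact hdiag _ i.2
  · exact hsuper _ (by omega)
  · rfl

end Matrix

/-- Correctness of the tridiagonal stationary qd step with shift: the recurrence
`û_1 = u_1 - σ`, `l̂_k = l_k u_k / û_k`, `û_{k+1} = l_k + u_{k+1} - σ - l̂_k`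
(assuming all `û_k ≠ 0`) produces bidiagonal factors with `L̂ Û = L U - σ I`.
(0-based sequences.) -/
theorem tridiagonal_stationary_qd_correct {F : Type*} [Field F] {n : ℕ}
    (l u lhat uhat : ℕ → F) (σ : F)
    (huhat0 : uhat 0 = u 0 - σ)
    (huhat_ne : ∀ k, k < n → uhat k ≠ 0)
    (hlhat : ∀ k, k < n - 1 → lhat k = l k * u k / uhat k)
    (huhat : ∀ k, k < n - 1 → uhat (k + 1) = l k + u (k + 1) - σ - lhat k) :
    let L : Matrix (Fin n) (Fin n) F :=
      Matrix.of fun i j => if i.1 = j.1 + 1 then l j.1 else if i = j then 1 else 0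
    let U : Matrix (Fin n) (Fin n) F :=
      Matrix.of fun i j => if i = j then u i.1 else if j.1 = i.1 + 1 then 1 else 0
    let Lhat : Matrix (Fin n) (Fin n) F :=
      Matrix.of fun i j => if i.1 = j.1 + 1 then lhat j.1 else if i = j then 1 else 0
    let Uhat : Matrix (Fin n) (Fin n) F :=
      Matrix.of fun i j => if i = j then uhat i.1 else if j.1 = i.1 + 1 then 1 else 0
    Lhat * Uhat = L * U - σ • (1 : Matrix (Fin n) (Fin n) F) := by
  intro L U Lhat Uhat
  change unitLowerBidiagonal lhat * upperBidiagonalUnitSuper uhat =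
    unitLowerBidiagonal l * upperBidiagonalUnitSuper u - σ • 1
  rw [unitLowerBidiagonal_mul_upperBidiagonalUnitSuper,
    unitLowerBidiagonal_mul_upperBidiagonalUnitSuper, tridiagonal_sub_smul_one]
  refine tridiagonal_congr (fun k hk => ?_) (fun k hk => ?_) fun _ _ => rfl
  · rw [hlhat k (by omega), div_mul_cancel₀ _ (huhat_ne k (by omega))]
  · cases k with
    | zero => simp [huhat0]
    | succ k =>
      simp only [huhat k (by omega), Nat.add_one_ne_zero, if_false, add_tsub_cancel_right]
      ring
end

section
/- (Correctness of quasiseparable LU, scalar order-one case) Let A be the n×n matrix with entries A(i,i)=d_i, A(i,j)=p_i a_{i-1}⋯a_{j+1} q_j for i>j, A(i,j)=g_i b_{i+1}⋯b_{j-1} h_j for i<j (scalar generators), and assume all leading principal minors of A are nonzero. Define d̃_1 = d_1, q̃_1 = q_1/d̃_1, g̃_1 = g_1, f_1 = q̃_1 g̃_1, and for k = 2,…,n-1: d̃_k = d_k - p_k f_{k-1} h_k, q̃_k = (q_k - a_k f_{k-1} h_k)/d̃_k, g̃_k = g_k - p_k f_{k-1} b_k, f_k = a_k f_{k-1} b_k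 + q̃_k g̃_k, and d̃_n = d_n - p_n f_{n-1} h_n. Let L be the matrix with generators {1, q̃_k, a_k, p_k} in its lower part (L(i,i)=1, L(i,j)=p_i a_{i-1}⋯a_{j+1} q̃_j for i>j, L(i,j)=0 for i<j) and U the matrix with U(i,i)=d̃_i, U(i,j)=g̃_i b_{i+1}⋯b_{j-1} h_j for i<j, U(i,j)=0 for i>j. Then A = L U. -/
open Matrix

private lemma fsum_aux {F : Type*} [Field F] (a b qt gt f : ℕ → F) (N : ℕ)
    (hf0 : f 0 = qt 0 * gt 0)
    (hf : ∀ k, 1 ≤ k → k ≤ N → f k = a k * f (k-1) * b k + qt k * gt k) :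
    ∀ m, m ≤ N → f m = ∑ k ∈ Finset.range (m+1),
      (∏ t ∈ Finset.Ico (k+1) (m+1), a t) * (qt k * gt k) *
        (∏ t ∈ Finset.Ico (k+1) (m+1), b t) := by
  intro m
  induction m with
  | zero => intro _; simp [hf0]
  | succ m ih =>
    intro hm
    rw [hf (m+1) (by omega) hm]
    simp only [Nat.add_sub_cancel]
    rw [ih (by omega)]
    conv_rhs => rw [Finset.sum_range_succ]
    rw [Finset.mul_sum, Finset.sum_mul]
    congr 1
    · apply Finset.sum_congr rfl
      intro k hk
      simp only [Finset.mem_range] at hk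
      rw [Finset.prod_Ico_succ_top (by omega : k+1 ≤ m+1),
          Finset.prod_Ico_succ_top (by omega : k+1 ≤ m+1)]
      ring
    · simp

/-- Correctness of the fast quasiseparable LU decomposition (scalar, order-one case):
the recurrences `d̃_1 = d_1`, `q̃_1 = q_1/d̃_1`, `g̃_1 = g_1`, `f_1 = q̃_1 g̃_1`,
`d̃_k = d_k - p_k f_{k-1} h_k`, `q̃_k = (q_k - a_k f_{k-1} h_k)/d̃_k`,
`g̃_k = g_k - p_k f_{k-1} b_k`, `f_k = a_k f_{k-1} b_k + q̃_k g̃_k`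
produce generators of unit lower and upper triangular factors with `A = L U`.
(All sequences are 0-based: index `k` here is `k+1` of the 1-based description.) -/
theorem quasiseparable_LU_correct {F : Type*} [Field F] {n : ℕ}
    (d q p g h a b dt qt gt f : ℕ → F)
    (hdt0 : dt 0 = d 0) (hqt0 : qt 0 = q 0 / dt 0) (hgt0 : gt 0 = g 0)
    (hf0 : f 0 = qt 0 * gt 0)
    (hdt : ∀ k, 1 ≤ k → k ≤ n - 1 → dt k = d k - p k * f (k - 1) * h k)
    (hqt : ∀ k, 1 ≤ k → k ≤ n - 2 → qt k = (q k - a k * f (k - 1) * h k) / dt k)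
    (hgt : ∀ k, 1 ≤ k → k ≤ n - 2 → gt k = g k - p k * f (k - 1) * b k)
    (hf : ∀ k, 1 ≤ k → k ≤ n - 2 → f k = a k * f (k - 1) * b k + qt k * gt k)
    (hdtne : ∀ k, k ≤ n - 1 → dt k ≠ 0) :
    let A : Matrix (Fin n) (Fin n) F :=
      Matrix.of fun i j =>
        if i = j then d i.1
        else if j.1 < i.1 then p i.1 * (∏ t ∈ Finset.Ico (j.1 + 1) i.1, a t) * q j.1
        else g i.1 * (∏ t ∈ Finset.Ico (i.1 + 1) j.1, b t) * h j.1
    let L : Matrix (Fin n) (Fin n) F :=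
      Matrix.of fun i j =>
        if i = j then 1
        else if j.1 < i.1 then p i.1 * (∏ t ∈ Finset.Ico (j.1 + 1) i.1, a t) * qt j.1
        else 0
    let U : Matrix (Fin n) (Fin n) F :=
      Matrix.of fun i j =>
        if i = j then dt i.1
        else if i.1 < j.1 then gt i.1 * (∏ t ∈ Finset.Ico (i.1 + 1) j.1, b t) * h j.1
        else 0
    A = L * U := by
  intro A L U
  have key := fsum_aux a b qt gt f (n-2) hf0 hf
  ext i j
  rw [Matrix.mul_apply]
  simp only [A, L, U, Matrix.of_apply]
  have hin := i.isLt
  have hjn := j.isLt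
  rcases lt_trichotomy (j : ℕ) (i : ℕ) with hij | hij | hij
  · -- lower part: j < i
    rw [if_neg (Fin.ne_of_val_ne (by omega : i.1 ≠ j.1)), if_pos hij]
    set φ : ℕ → F := fun k =>
      if k < j.1 then
        (p i.1 * (∏ t ∈ Finset.Ico (k+1) i.1, a t) * qt k) *
          (gt k * (∏ t ∈ Finset.Ico (k+1) j.1, b t) * h j.1)
      else if k = j.1 then
        (p i.1 * (∏ t ∈ Finset.Ico (j.1+1) i.1, a t) * qt j.1) * dt j.1
      else 0 with hφ
    have h1 : ∀ k : Fin n, (if i = k then (1:F) else if k.1 < i.1 then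
        p i.1 * (∏ t ∈ Finset.Ico (k.1+1) i.1, a t) * qt k.1 else 0) *
        (if k = j then dt k.1 else if k.1 < j.1 then
        gt k.1 * (∏ t ∈ Finset.Ico (k.1+1) j.1, b t) * h j.1 else 0) = φ k.1 := by
      intro k
      rcases lt_trichotomy (k : ℕ) (j : ℕ) with hk | hk | hk
      · rw [if_neg (Fin.ne_of_val_ne (by omega)), if_pos (by omega),
            if_neg (Fin.ne_of_val_ne (by omega)), if_pos hk, hφ]
        simp only [if_pos hk]
      · have hkj : k = j := Fin.ext hk
        subst hkj
        rw [if_neg (Fin.ne_of_val_ne (by omega)), if_pos (by omega), if_pos rfl, hφ]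
        simp
      · rw [if_neg (Fin.ne_of_val_ne (by omega : k.1 ≠ j.1)),
            if_neg (by omega : ¬ k.1 < j.1), mul_zero, hφ]
        simp only [if_neg (by omega : ¬ k.1 < j.1), if_neg (by omega : ¬ k.1 = j.1)]
    have hvan : ∀ k ∈ Finset.range n, k ∉ Finset.range (j.1+1) → φ k = 0 := by
      intro k _ hk
      simp only [Finset.mem_range] at hk
      simp only [hφ]
      rw [if_neg (by omega), if_neg (by omega)]
    have hφj : φ j.1 = (p i.1 * (∏ t ∈ Finset.Ico (j.1+1) i.1, a t) * qt j.1) * dt j.1 := by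
      simp [hφ]
    rw [Finset.sum_congr rfl fun k _ => h1 k, Fin.sum_univ_eq_sum_range φ n,
        ← Finset.sum_subset (Finset.range_subset_range.2 (by omega : j.1+1 ≤ n)) hvan,
        Finset.sum_range_succ, hφj]
    have hdtj : dt j.1 ≠ 0 := hdtne j.1 (by omega)
    by_cases hj0 : j.1 = 0
    · rw [hj0]
      simp only [Finset.range_zero, Finset.sum_empty, zero_add]
      rw [hqt0]
      rw [hj0] at hdtj
      field_simp
    · have hsum : ∑ k ∈ Finset.range j.1, φ k
          = (p i.1 * ((a j.1 * ∏ t ∈ Finset.Ico (j.1+1) i.1, a t) * h j.1)) * f (j.1-1) := by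
        rw [key (j.1-1) (by omega)]
        have hj1 : j.1 - 1 + 1 = j.1 := by omega
        rw [hj1, Finset.mul_sum]
        apply Finset.sum_congr rfl
        intro k hk
        simp only [Finset.mem_range] at hk
        simp only [hφ, if_pos hk]
        rw [← Finset.prod_Ico_consecutive a (by omega : k+1 ≤ j.1) (by omega : j.1 ≤ i.1),
            Finset.prod_eq_prod_Ico_succ_bot (by omega : j.1 < i.1) a]
        ring
      rw [hsum, hqt j.1 (by omega) (by omega)]
      field_simp
      ring
  · -- diagonal
    have hji : j = i := Fin.ext hij
    subst hji
    rw [if_pos rfl]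
    set φ : ℕ → F := fun k =>
      if k < j.1 then
        (p j.1 * (∏ t ∈ Finset.Ico (k+1) j.1, a t) * qt k) *
          (gt k * (∏ t ∈ Finset.Ico (k+1) j.1, b t) * h j.1)
      else if k = j.1 then dt j.1
      else 0 with hφ
    have h1 : ∀ k : Fin n, (if j = k then (1:F) else if k.1 < j.1 then
        p j.1 * (∏ t ∈ Finset.Ico (k.1+1) j.1, a t) * qt k.1 else 0) *
        (if k = j then dt k.1 else if k.1 < j.1 then
        gt k.1 * (∏ t ∈ Finset.Ico (k.1+1) j.1, b t) * h j.1 else 0) = φ k.1 := by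
      intro k
      rcases lt_trichotomy (k : ℕ) (j : ℕ) with hk | hk | hk
      · rw [if_neg (Fin.ne_of_val_ne (by omega)), if_pos (by omega),
            if_neg (Fin.ne_of_val_ne (by omega)), if_pos hk, hφ]
        simp only [if_pos hk]
      · have hkj : k = j := Fin.ext hk
        subst hkj
        rw [if_pos rfl, if_pos rfl, one_mul, hφ]
        simp
      · simp only [hφ, if_neg (show j ≠ k from Fin.ne_of_val_ne (by omega)),
          if_neg (show k ≠ j from Fin.ne_of_val_ne (by omega)),
          if_neg (by omega : ¬ k.1 < j.1), if_neg (by omega : ¬ (k:ℕ) = j.1), mul_zero]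
    have hvan : ∀ k ∈ Finset.range n, k ∉ Finset.range (j.1+1) → φ k = 0 := by
      intro k _ hk
      simp only [Finset.mem_range] at hk
      simp only [hφ]
      rw [if_neg (by omega), if_neg (by omega)]
    have hφj : φ j.1 = dt j.1 := by simp [hφ]
    rw [Finset.sum_congr rfl fun k _ => h1 k, Fin.sum_univ_eq_sum_range φ n,
        ← Finset.sum_subset (Finset.range_subset_range.2 (by omega : j.1+1 ≤ n)) hvan,
        Finset.sum_range_succ, hφj]
    by_cases hj0 : j.1 = 0
    · rw [hj0]
      simp only [Finset.range_zero, Finset.sum_empty, zero_add]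
      exact hdt0.symm
    · have hsum : ∑ k ∈ Finset.range j.1, φ k = (p j.1 * h j.1) * f (j.1-1) := by
        rw [key (j.1-1) (by omega)]
        have hj1 : j.1 - 1 + 1 = j.1 := by omega
        rw [hj1, Finset.mul_sum]
        apply Finset.sum_congr rfl
        intro k hk
        simp only [Finset.mem_range] at hk
        simp only [hφ, if_pos hk]
        ring
      rw [hsum, hdt j.1 (by omega) (by omega)]
      ring
  · -- upper part: i < j
    rw [if_neg (Fin.ne_of_val_ne (by omega : i.1 ≠ j.1)), if_neg (by omega : ¬ j.1 < i.1)]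
    set φ : ℕ → F := fun k =>
      if k < i.1 then
        (p i.1 * (∏ t ∈ Finset.Ico (k+1) i.1, a t) * qt k) *
          (gt k * (∏ t ∈ Finset.Ico (k+1) j.1, b t) * h j.1)
      else if k = i.1 then gt i.1 * (∏ t ∈ Finset.Ico (i.1+1) j.1, b t) * h j.1
      else 0 with hφ
    have h1 : ∀ k : Fin n, (if i = k then (1:F) else if k.1 < i.1 then
        p i.1 * (∏ t ∈ Finset.Ico (k.1+1) i.1, a t) * qt k.1 else 0) *
        (if k = j then dt k.1 else if k.1 < j.1 then
        gt k.1 * (∏ t ∈ Finset.Ico (k.1+1) j.1, b t) * h j.1 else 0) = φ k.1 := by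
      intro k
      rcases lt_trichotomy (k : ℕ) (i : ℕ) with hk | hk | hk
      · rw [if_neg (Fin.ne_of_val_ne (by omega)), if_pos (by omega),
            if_neg (Fin.ne_of_val_ne (by omega)), if_pos (by omega : k.1 < j.1), hφ]
        simp only [if_pos hk]
      · have hkj : k = i := Fin.ext hk
        subst hkj
        rw [if_pos rfl, if_neg (Fin.ne_of_val_ne (by omega)),
            if_pos (by omega : k.1 < j.1), one_mul, hφ]
        simp
      · rw [if_neg (Fin.ne_of_val_ne (by omega : i.1 ≠ k.1)),
            if_neg (by omega : ¬ k.1 < i.1), zero_mul, hφ]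
        simp only [if_neg (by omega : ¬ k.1 < i.1), if_neg (by omega : ¬ k.1 = i.1)]
    have hvan : ∀ k ∈ Finset.range n, k ∉ Finset.range (i.1+1) → φ k = 0 := by
      intro k _ hk
      simp only [Finset.mem_range] at hk
      simp only [hφ]
      rw [if_neg (by omega), if_neg (by omega)]
    have hφi : φ i.1 = gt i.1 * (∏ t ∈ Finset.Ico (i.1+1) j.1, b t) * h j.1 := by
      simp [hφ]
    rw [Finset.sum_congr rfl fun k _ => h1 k, Fin.sum_univ_eq_sum_range φ n,
        ← Finset.sum_subset (Finset.range_subset_range.2 (by omega : i.1+1 ≤ n)) hvan,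
        Finset.sum_range_succ, hφi]
    by_cases hi0 : i.1 = 0
    · rw [hi0]
      simp only [Finset.range_zero, Finset.sum_empty, zero_add]
      rw [hgt0]
    · have hsum : ∑ k ∈ Finset.range i.1, φ k
          = (p i.1 * ((b i.1 * ∏ t ∈ Finset.Ico (i.1+1) j.1, b t) * h j.1)) * f (i.1-1) := by
        rw [key (i.1-1) (by omega)]
        have hi1 : i.1 - 1 + 1 = i.1 := by omega
        rw [hi1, Finset.mul_sum]
        apply Finset.sum_congr rfl
        intro k hk
        simp only [Finset.mem_range] at hk
        simp only [hφ, if_pos hk]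
        rw [← Finset.prod_Ico_consecutive b (by omega : k+1 ≤ i.1) (by omega : i.1 ≤ j.1),
            Finset.prod_eq_prod_Ico_succ_bot (by omega : i.1 < j.1) b]
        ring
      rw [hsum, hgt i.1 (by omega) (by omega)]
      ring
end

section
/- (Correctness of the Hessenberg dqds step, order-one upper part) Let L be unit lower bidiagonal with subdiagonals s_1,…,s_{n-1} and U upper triangular with U(k,k)=d_k and U(k,j)=g_k b_{k+1}⋯b_{j-1} h_j for k<j (scalar generators, rank-one-type upper part with scalar b's), and let σ be a scalar. Run: t_1 = d_1 - σ, ĝ_1 = g_1, d̂_1 = t_1 + s_1 ĝ_1 h_2, ŝ_1 = s_1 d_2 / d̂_1, t_2 = t_1 d_2/d̂_1 - σ; for k = 2,…,n-1: ĥ_k = h_k + s_k b_k h_{k+1}, ĝ_k = g_k - ŝ_{k-1} ĝ_{k-1} b_k, d̂_k = t_k + s_k ĝ_k h_{k+1}, ŝ_k = s_k d_{k+1}/d̂_k, t_{k+1} = t_k d_{k+1}/d̂_k - σ; finally d̂_n = t_n, ĥ_n = h_n. Assume all d̂_k ≠ 0 for k < n. Let L̂ be unit lower bidiagonal with subdiagonals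 ŝ_k and Û upper triangular with Û(k,k) = d̂_k and Û(k,j) = ĝ_k b_{k+1}⋯b_{j-1} ĥ_j for k<j. Then L̂ Û = U L - σ I. -/
open Matrix

private lemma sum_left' {F : Type*} [NonAssocSemiring F] {n : ℕ} (i : ℕ) (hi : i < n)
    (a : ℕ → F) (X : Fin n → F) :
    (∑ k : Fin n, (if i = k.1 + 1 then a k.1 else if (⟨i, hi⟩ : Fin n) = k then 1 else 0) * X k)
      = X ⟨i, hi⟩ + if h : 0 < i then a (i - 1) * X ⟨i - 1, by omega⟩ else 0 := by
  by_cases hip : 0 < i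
  · rw [dif_pos hip]
    have step : ∀ k : Fin n,
        (if i = k.1 + 1 then a k.1 else if (⟨i, hi⟩ : Fin n) = k then 1 else 0) * X k
        = (if k = ⟨i, hi⟩ then X k else 0)
          + (if k = (⟨i - 1, by omega⟩ : Fin n) then a k.1 * X k else 0) := by
      intro k
      by_cases h1 : i = k.1 + 1
      · have hk : k = (⟨i - 1, by omega⟩ : Fin n) := by
          apply Fin.ext; simp; omega
        have hne : ¬ ((⟨i, hi⟩ : Fin n) = k) := by
          intro hh; have := congrArg Fin.val hh; simp at this; omega
        have hne' : ¬ (k = ⟨i, hi⟩) := fun hh => hne hh.symm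
        rw [if_pos h1, if_neg hne', if_pos hk, zero_add]
      · have hk : ¬ (k = (⟨i - 1, by omega⟩ : Fin n)) := by
          intro hh; have := congrArg Fin.val hh; simp at this; omega
        rw [if_neg h1, if_neg hk, add_zero]
        by_cases h2 : (⟨i, hi⟩ : Fin n) = k
        · rw [if_pos h2, if_pos h2.symm, one_mul]
        · rw [if_neg h2, if_neg (fun hh => h2 hh.symm), zero_mul]
    rw [Finset.sum_congr rfl fun k _ => step k, Finset.sum_add_distrib,
      Finset.sum_ite_eq' Finset.univ, Finset.sum_ite_eq' Finset.univ,
      if_pos (Finset.mem_univ _), if_pos (Finset.mem_univ _)]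
  · rw [dif_neg hip, add_zero]
    have step : ∀ k : Fin n,
        (if i = k.1 + 1 then a k.1 else if (⟨i, hi⟩ : Fin n) = k then 1 else 0) * X k
        = (if k = ⟨i, hi⟩ then X k else 0) := by
      intro k
      rw [if_neg (by omega)]
      by_cases h2 : (⟨i, hi⟩ : Fin n) = k
      · rw [if_pos h2, if_pos h2.symm, one_mul]
      · rw [if_neg h2, if_neg (fun hh => h2 hh.symm), zero_mul]
    rw [Finset.sum_congr rfl fun k _ => step k, Finset.sum_ite_eq' Finset.univ,
      if_pos (Finset.mem_univ _)]

private lemma sum_right' {F : Type*} [NonAssocSemiring F] {n : ℕ} (j : ℕ) (hj : j < n)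
    (a : ℕ → F) (X : Fin n → F) :
    (∑ k : Fin n, X k * (if k.1 = j + 1 then a j else if k = ⟨j, hj⟩ then 1 else 0))
      = X ⟨j, hj⟩ + if h : j + 1 < n then X ⟨j + 1, h⟩ * a j else 0 := by
  by_cases hjn : j + 1 < n
  · rw [dif_pos hjn]
    have step : ∀ k : Fin n,
        X k * (if k.1 = j + 1 then a j else if k = ⟨j, hj⟩ then 1 else 0)
        = (if k = ⟨j, hj⟩ then X k else 0)
          + (if k = (⟨j + 1, hjn⟩ : Fin n) then X k * a j else 0) := by
      intro k
      by_cases h1 : k.1 = j + 1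
      · have hk : k = (⟨j + 1, hjn⟩ : Fin n) := Fin.ext h1
        have hne : ¬ (k = ⟨j, hj⟩) := by
          intro hh; have := congrArg Fin.val hh; simp at this; omega
        rw [if_pos h1, if_neg hne, if_pos hk, zero_add]
      · have hk : ¬ (k = (⟨j + 1, hjn⟩ : Fin n)) := by
          intro hh; have := congrArg Fin.val hh; simp at this; omega
        rw [if_neg h1, if_neg hk, add_zero]
        by_cases h2 : k = ⟨j, hj⟩
        · rw [if_pos h2, if_pos h2, mul_one]
        · rw [if_neg h2, if_neg h2, mul_zero]
    rw [Finset.sum_congr rfl fun k _ => step k, Finset.sum_add_distrib,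
      Finset.sum_ite_eq' Finset.univ, Finset.sum_ite_eq' Finset.univ,
      if_pos (Finset.mem_univ _), if_pos (Finset.mem_univ _)]
  · rw [dif_neg hjn, add_zero]
    have step : ∀ k : Fin n,
        X k * (if k.1 = j + 1 then a j else if k = ⟨j, hj⟩ then 1 else 0)
        = (if k = ⟨j, hj⟩ then X k else 0) := by
      intro k
      rw [if_neg (by have := k.2; omega)]
      by_cases h2 : k = ⟨j, hj⟩
      · rw [if_pos h2, if_pos h2, mul_one]
      · rw [if_neg h2, if_neg h2, mul_zero]
    rw [Finset.sum_congr rfl fun k _ => step k, Finset.sum_ite_eq' Finset.univ,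
      if_pos (Finset.mem_univ _)]

/-- Correctness of one step of the Hessenberg dqds algorithm (scalar generators,
order-one upper part, 0-based indexing): if the dqds recurrences with shift `σ` produce
nonzero pivots `d̂_k`, then the output factors satisfy `L̂ Û = U L - σ I`. -/
theorem hessenberg_dqds_correct {F : Type*} [Field F] {n : ℕ}
    (s d g b h t ghat hhat dhat shat : ℕ → F) (σ : F)
    (ht0 : t 0 = d 0 - σ)
    (hghat0 : ghat 0 = g 0)
    (hdhat0 : dhat 0 = t 0 + s 0 * ghat 0 * h 1)
    (hshat0 : shat 0 = s 0 * d 1 / dhat 0)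
    (ht1 : t 1 = t 0 * d 1 / dhat 0 - σ)
    (hhhat : ∀ k, 1 ≤ k → k ≤ n - 2 → hhat k = h k + s k * b k * h (k + 1))
    (hghat : ∀ k, 1 ≤ k → k ≤ n - 2 → ghat k = g k - shat (k - 1) * ghat (k - 1) * b k)
    (hdhat : ∀ k, 1 ≤ k → k ≤ n - 2 → dhat k = t k + s k * ghat k * h (k + 1))
    (hshat : ∀ k, 1 ≤ k → k ≤ n - 2 → shat k = s k * d (k + 1) / dhat k)
    (ht : ∀ k, 1 ≤ k → k ≤ n - 2 → t (k + 1) = t k * d (k + 1) / dhat k - σ)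
    (hdhatn : dhat (n - 1) = t (n - 1))
    (hhhatn : hhat (n - 1) = h (n - 1))
    (hdhatne : ∀ k, k < n - 1 → dhat k ≠ 0) :
    let L : Matrix (Fin n) (Fin n) F :=
      Matrix.of fun i j => if i.1 = j.1 + 1 then s j.1 else if i = j then 1 else 0
    let U : Matrix (Fin n) (Fin n) F :=
      Matrix.of fun i j =>
        if i = j then d i.1
        else if i.1 < j.1 then g i.1 * (∏ u ∈ Finset.Ico (i.1 + 1) j.1, b u) * h j.1
        else 0
    let Lhat : Matrix (Fin n) (Fin n) F :=
      Matrix.of fun i j => if i.1 = j.1 + 1 then shat j.1 else if i = j then 1 else 0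
    let Uhat : Matrix (Fin n) (Fin n) F :=
      Matrix.of fun i j =>
        if i = j then dhat i.1
        else if i.1 < j.1 then ghat i.1 * (∏ u ∈ Finset.Ico (i.1 + 1) j.1, b u) * hhat j.1
        else 0
    Lhat * Uhat = U * L - σ • (1 : Matrix (Fin n) (Fin n) F) := by
  intro L U Lhat Uhat
  have key : ∀ k, 1 ≤ k → k ≤ n - 1 → t k + shat (k - 1) * ghat (k - 1) * h k = d k - σ := by
    intro k hk1 hk2
    by_cases h1 : k = 1
    · subst h1
      have hd0 : dhat 0 ≠ 0 := hdhatne 0 (by omega)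
      rw [ht1, hshat0]
      field_simp
      linear_combination (-(d 1)) * hdhat0
    · have hk2' : 1 ≤ k - 1 := by omega
      have hk3 : k - 1 ≤ n - 2 := by omega
      have hd : dhat (k - 1) ≠ 0 := hdhatne _ (by omega)
      have e1 := ht (k - 1) hk2' hk3
      have e2 := hshat (k - 1) hk2' hk3
      have e3 := hdhat (k - 1) hk2' hk3
      rw [show k - 1 + 1 = k from by omega] at e1 e2 e3
      rw [e1, e2]
      field_simp
      linear_combination (-(d k)) * e3
  ext ⟨i, hi⟩ ⟨j, hj⟩
  simp only [L, U, Lhat, Uhat, Matrix.mul_apply, Matrix.sub_apply, Matrix.smul_apply,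
    Matrix.one_apply, smul_eq_mul, Matrix.of_apply]
  rw [sum_left' i hi shat, sum_right' j hj s]
  simp only [Fin.mk.injEq, Fin.val_mk]
  rcases Nat.lt_trichotomy i j with hij | rfl | hij
  · -- i < j
    have hne : ¬ i = j := by omega
    have h7 : i < j + 1 := by omega
    have hne2 : ¬ i = j + 1 := by omega
    have h5 : i - 1 < j := by omega
    have hne3 : ¬ i - 1 = j := by omega
    simp only [if_neg hne, if_pos hij, if_neg hne3, if_pos h5, if_neg hne2, if_pos h7,
      mul_zero, sub_zero]
    by_cases hi0 : 0 < i
    · rw [dif_pos hi0]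
      rw [show i - 1 + 1 = i from by omega]
      have hgi := hghat i (by omega) (by omega)
      have hprod : (∏ u ∈ Finset.Ico i j, b u) = b i * ∏ u ∈ Finset.Ico (i + 1) j, b u :=
        Finset.prod_eq_prod_Ico_succ_bot hij b
      by_cases hjn : j + 1 < n
      · rw [dif_pos hjn]
        have hh := hhhat j (by omega) (by omega)
        have hprod2 : (∏ u ∈ Finset.Ico (i + 1) (j + 1), b u)
            = (∏ u ∈ Finset.Ico (i + 1) j, b u) * b j :=
          Finset.prod_Ico_succ_top (by omega) b
        rw [hgi, hh, hprod, hprod2]; ring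
      · rw [dif_neg hjn, add_zero]
        rw [hgi, hprod, show j = n - 1 from by omega, hhhatn]; ring
    · rw [dif_neg hi0, add_zero]
      have hi0' : i = 0 := by omega
      subst hi0'
      by_cases hjn : j + 1 < n
      · rw [dif_pos hjn]
        have hh := hhhat j (by omega) (by omega)
        have hprod2 : (∏ u ∈ Finset.Ico (0 + 1) (j + 1), b u)
            = (∏ u ∈ Finset.Ico (0 + 1) j, b u) * b j :=
          Finset.prod_Ico_succ_top (by omega) b
        rw [hghat0, hh, hprod2]; ring
      · rw [dif_neg hjn, add_zero]
        rw [hghat0, show j = n - 1 from by omega, hhhatn]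
  · -- i = j
    simp only [eq_self_iff_true, if_true, lt_self_iff_false, if_false, mul_one]
    by_cases hi0 : 0 < i
    · rw [dif_pos hi0]
      rw [if_neg (show ¬ i - 1 = i from by omega), if_pos (show i - 1 < i from by omega),
        show i - 1 + 1 = i from by omega, Finset.Ico_self, Finset.prod_empty, mul_one]
      by_cases hin : i + 1 < n
      · rw [dif_pos hin, if_neg (show ¬ i = i + 1 from by omega),
          if_pos (show i < i + 1 from by omega), Finset.Ico_self, Finset.prod_empty, mul_one]
        rw [hdhat i (by omega) (by omega), hghat i (by omega) (by omega),
          hhhat i (by omega) (by omega)]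
        linear_combination key i (by omega) (by omega)
      · rw [dif_neg hin, add_zero]
        rw [show i = n - 1 from by omega, hdhatn, hhhatn]
        linear_combination key (n - 1) (by omega) (by omega)
    · rw [dif_neg hi0, add_zero]
      have hi0' : i = 0 := by omega
      subst hi0'
      by_cases hin : 0 + 1 < n
      · rw [dif_pos hin, if_neg (show ¬ 0 = 0 + 1 from by omega),
          if_pos (show 0 < 0 + 1 from by omega), Finset.Ico_self, Finset.prod_empty, mul_one]
        simp only [Nat.zero_add]
        rw [hdhat0, ht0, hghat0]; ring
      · rw [dif_neg hin, add_zero]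
        have hd0 : dhat 0 = t 0 := by
          have := hdhatn; rwa [show n - 1 = 0 from by omega] at this
        rw [hd0, ht0]
  · -- j < i
    have hne : ¬ i = j := by omega
    have hnlt : ¬ i < j := by omega
    simp only [if_neg hne, if_neg hnlt, mul_zero, sub_zero, zero_add]
    rw [dif_pos (show 0 < i from by omega)]
    by_cases hij2 : i = j + 1
    · have heq : i - 1 = j := by omega
      rw [if_pos heq, heq, dif_pos (show j + 1 < n from by omega), if_pos hij2, hij2]
      have hdj : dhat j ≠ 0 := hdhatne j (by omega)
      by_cases hj0 : j = 0
      · subst hj0; rw [hshat0, div_mul_cancel₀ _ hdj]; ring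
      · rw [hshat j (by omega) (by omega), div_mul_cancel₀ _ hdj]; ring
    · rw [if_neg (show ¬ i - 1 = j from by omega), if_neg (show ¬ i - 1 < j from by omega),
        mul_zero]
      by_cases hjn : j + 1 < n
      · rw [dif_pos hjn, if_neg hij2, if_neg (show ¬ i < j + 1 from by omega), zero_mul]
      · rw [dif_neg hjn]
end

section
/- (Characteristic polynomial of the comrade matrix) Let {r_k} be monic polynomials satisfying r_0(x) = 1, r_1(x) = x - α_0, r_{k+1}(x) = (x - α_k) r_k(x) - β_k r_{k-1}(x) for k ≥ 1, with scalars α_k and β_k. Let P(x) = r_n(x) + m_{n-1} r_{n-1}(x) + ⋯ + m_1 r_1(x) + m_0 r_0(x). Let C be the n×n comrade matrix with C(1,1) = α_{n-1} - m_{n-1}, C(1,2) = β_{n-1} - m_{n-2}, C(1,j) = -m_{n-j} for j ≥ 3, C(k,k) = α_{n-k} for k ≥ 2, C(k,k+1) = β_{n-k} for k ≥ 2, C(k+1,k) = 1 for all k, and zeros elsewhere. Then det(xI - C) = P(x). -/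
open Matrix Polynomial

set_option maxHeartbeats 1600000 in
/-- The characteristic polynomial of the comrade matrix of
`P = r_n + m_{n-1} r_{n-1} + ⋯ + m_0 r_0`, where `{r_k}` are the monic orthogonal
polynomials generated by the three-term recurrence, equals `P`.
(0-based matrix indexing.) -/
theorem comrade_charpoly {F : Type*} [Field F] {n : ℕ} (hn : 1 ≤ n)
    (α β m : ℕ → F) (r : ℕ → Polynomial F)
    (hr0 : r 0 = 1)
    (hr1 : r 1 = X - Polynomial.C (α 0))
    (hrrec : ∀ k, 1 ≤ k →
      r (k + 1) = (X - Polynomial.C (α k)) * r k - Polynomial.C (β k) * r (k - 1)) :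
    let C : Matrix (Fin n) (Fin n) F :=
      Matrix.of fun i j =>
        if i.1 = 0 ∧ j.1 = 0 then α (n - 1) - m (n - 1)
        else if i.1 = 0 ∧ j.1 = 1 then β (n - 1) - m (n - 2)
        else if i.1 = 0 then -m (n - 1 - j.1)
        else if i.1 = j.1 + 1 then 1
        else if i.1 = j.1 then α (n - 1 - i.1)
        else if j.1 = i.1 + 1 then β (n - 1 - i.1)
        else 0
    C.charpoly = r n + ∑ j ∈ Finset.range n, Polynomial.C (m j) * r j := by
  intro Cmat
  have hCmat : ∀ p q : Fin n, Cmat p q =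
      (if p.1 = 0 ∧ q.1 = 0 then α (n - 1) - m (n - 1)
        else if p.1 = 0 ∧ q.1 = 1 then β (n - 1) - m (n - 2)
        else if p.1 = 0 then -m (n - 1 - q.1)
        else if p.1 = q.1 + 1 then 1
        else if p.1 = q.1 then α (n - 1 - p.1)
        else if q.1 = p.1 + 1 then β (n - 1 - p.1)
        else 0) := fun p q => rfl
  obtain ⟨N, rfl⟩ : ∃ N, n = N + 1 := ⟨n - 1, by omega⟩
  have e1 : N + 1 - 1 = N := by omega
  have e2 : N + 1 - 2 = N - 1 := by omega
  set A := charmatrix Cmat with hA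
  set v : Fin (N + 1) → Polynomial F := fun i => r (N - i.1) with hv
  set P : Polynomial F :=
    r (N + 1) + ∑ j ∈ Finset.range (N + 1), Polynomial.C (m j) * r j with hP
  -- master entry lemma for A
  have hAentry : ∀ p q : Fin (N + 1), A p q =
      (if p.1 = 0 ∧ q.1 = 0 then X - Polynomial.C (α N - m N)
        else if p.1 = 0 ∧ q.1 = 1 then -Polynomial.C (β N - m (N - 1))
        else if p.1 = 0 then Polynomial.C (m (N - q.1))
        else if p.1 = q.1 + 1 then -1
        else if p.1 = q.1 then X - Polynomial.C (α (N - p.1))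
        else if q.1 = p.1 + 1 then -Polynomial.C (β (N - p.1))
        else 0) := by
    intro p q
    have hpb : p.1 < N + 1 := p.isLt
    have hqb : q.1 < N + 1 := q.isLt
    rcases eq_or_ne p q with rfl | hpq
    · rw [hA, charmatrix_apply_eq, hCmat p p]
      simp only [e1, e2]
      split_ifs <;> first | rfl | omega
    · have hpq' : p.1 ≠ q.1 := fun h => hpq (Fin.ext h)
      rw [hA, charmatrix_apply_ne _ _ _ hpq, hCmat p q]
      simp only [e1, e2]
      split_ifs <;> first | rfl | omega | simp | (exfalso; omega)
  -- the key mulVec identity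
  have hAv : A *ᵥ v = fun i : Fin (N + 1) => if i.1 = 0 then P else 0 := by
    funext i
    simp only [Matrix.mulVec, dotProduct]
    by_cases hi : i.1 = 0
    · rw [if_pos hi]
      have hi0 : i = 0 := Fin.ext (by simpa using hi)
      subst hi0
      have hterm : ∀ j : Fin (N + 1), A 0 j * v j =
          (if j.1 = 0 then X - Polynomial.C (α N - m N)
            else if j.1 = 1 then -Polynomial.C (β N - m (N - 1))
            else Polynomial.C (m (N - j.1))) * r (N - j.1) := by
        intro j
        have hjb : j.1 < N + 1 := j.isLt
        rw [hAentry, hv]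
        simp only [Fin.val_zero, eq_self_iff_true, true_and]
        split_ifs <;> first | rfl | omega | simp_all
      have hsum : ∑ j : Fin (N + 1), A 0 j * v j
          = ∑ t ∈ Finset.range (N + 1),
            (if t = 0 then X - Polynomial.C (α N - m N)
            else if t = 1 then -Polynomial.C (β N - m (N - 1))
            else Polynomial.C (m (N - t))) * r (N - t) := by
        rw [Finset.sum_congr rfl (fun j _ => hterm j)]
        exact Fin.sum_univ_eq_sum_range
          (fun t => (if t = 0 then X - Polynomial.C (α N - m N)
            else if t = 1 then -Polynomial.C (β N - m (N - 1))
            else Polynomial.C (m (N - t))) * r (N - t)) (N + 1)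
      rw [hsum]
      cases N with
      | zero =>
          rw [hP, Finset.sum_range_one, Finset.sum_range_one, if_pos rfl, hr0, hr1]
          simp only [map_sub]
          ring
      | succ K =>
          rw [Finset.sum_range_succ', Finset.sum_range_succ']
          have hg2 : ∀ x ∈ Finset.range K,
              (if x + 1 + 1 = 0 then X - Polynomial.C (α (K + 1) - m (K + 1))
                else if x + 1 + 1 = 1 then -Polynomial.C (β (K + 1) - m (K + 1 - 1))
                else Polynomial.C (m (K + 1 - (x + 1 + 1)))) * r (K + 1 - (x + 1 + 1))
              = Polynomial.C (m (K - 1 - x)) * r (K - 1 - x) := by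
            intro x hx
            rw [if_neg (by omega), if_neg (by omega)]
            have h : K + 1 - (x + 1 + 1) = K - 1 - x := by omega
            rw [h]
          rw [Finset.sum_congr rfl hg2]
          have hrefl : ∑ x ∈ Finset.range K, Polynomial.C (m (K - 1 - x)) * r (K - 1 - x)
              = ∑ x ∈ Finset.range K, Polynomial.C (m x) * r x :=
            Finset.sum_range_reflect (fun t => Polynomial.C (m t) * r t) K
          rw [hrefl, hP, Finset.sum_range_succ, Finset.sum_range_succ,
            hrrec (K + 1) (by omega)]
          rw [show K + 1 - 0 = K + 1 by omega]
          split_ifs <;> first | omega | contradiction |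
            (rw [show K + 1 - 1 = K by omega]; simp only [map_sub]; ring) |
            (rw [show K + 1 - 1 = K by omega]; ring) |
            (simp only [map_sub]; ring) | ring
    · rw [if_neg hi]
      obtain ⟨b, hb⟩ : ∃ b, i.1 = b + 1 := ⟨i.1 - 1, by omega⟩
      have hbN : b + 1 ≤ N := by have := i.isLt; omega
      have hterm : ∀ j : Fin (N + 1), A i j * v j =
          (if b + 1 = j.1 + 1 then (-1 : Polynomial F)
            else if b + 1 = j.1 then X - Polynomial.C (α (N - (b + 1)))
            else if j.1 = b + 1 + 1 then -Polynomial.C (β (N - (b + 1)))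
            else 0) * r (N - j.1) := by
        intro j
        have hjb : j.1 < N + 1 := j.isLt
        rw [hAentry, hv, hb]
        split_ifs <;> first | rfl | omega | simp_all
      have hsum : ∑ j : Fin (N + 1), A i j * v j
          = ∑ t ∈ Finset.range (N + 1),
            (if b + 1 = t + 1 then (-1 : Polynomial F)
            else if b + 1 = t then X - Polynomial.C (α (N - (b + 1)))
            else if t = b + 1 + 1 then -Polynomial.C (β (N - (b + 1)))
            else 0) * r (N - t) := by
        rw [Finset.sum_congr rfl (fun j _ => hterm j)]
        exact Fin.sum_univ_eq_sum_range
          (fun t => (if b + 1 = t + 1 then (-1 : Polynomial F)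
            else if b + 1 = t then X - Polynomial.C (α (N - (b + 1)))
            else if t = b + 1 + 1 then -Polynomial.C (β (N - (b + 1)))
            else 0) * r (N - t)) (N + 1)
      rw [hsum]
      rcases Nat.lt_or_ge (b + 1) N with hlt | hge
      · -- middle rows
        rw [Finset.range_eq_Ico, ← Finset.sum_Ico_consecutive _
          (show 0 ≤ b + 1 + 1 + 1 by omega) (show b + 1 + 1 + 1 ≤ N + 1 by omega)]
        have hzero2 : ∀ x ∈ Finset.Ico (b + 1 + 1 + 1) (N + 1),
            (if b + 1 = x + 1 then (-1 : Polynomial F)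
              else if b + 1 = x then X - Polynomial.C (α (N - (b + 1)))
              else if x = b + 1 + 1 then -Polynomial.C (β (N - (b + 1)))
              else 0) * r (N - x) = 0 := by
          intro x hx
          rw [Finset.mem_Ico] at hx
          rw [if_neg (by omega), if_neg (by omega), if_neg (by omega), zero_mul]
        rw [Finset.sum_eq_zero hzero2, add_zero, ← Finset.range_eq_Ico,
          Finset.sum_range_succ, Finset.sum_range_succ, Finset.sum_range_succ]
        have hzero1 : ∀ x ∈ Finset.range b,
            (if b + 1 = x + 1 then (-1 : Polynomial F)
              else if b + 1 = x then X - Polynomial.C (α (N - (b + 1)))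
              else if x = b + 1 + 1 then -Polynomial.C (β (N - (b + 1)))
              else 0) * r (N - x) = 0 := by
          intro x hx
          rw [Finset.mem_range] at hx
          rw [if_neg (by omega), if_neg (by omega), if_neg (by omega), zero_mul]
        rw [Finset.sum_eq_zero hzero1]
        split_ifs <;> first | omega | contradiction |
          (rw [show N - b = (N - (b + 1)) + 1 by omega,
            show N - (b + 1 + 1) = (N - (b + 1)) - 1 by omega,
            hrrec (N - (b + 1)) (by omega)]; ring)
      · -- last row
        have hbN' : b + 1 = N := by omega
        rw [show N + 1 = b + 1 + 1 by omega, Finset.sum_range_succ, Finset.sum_range_succ]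
        have hzero1 : ∀ x ∈ Finset.range b,
            (if b + 1 = x + 1 then (-1 : Polynomial F)
              else if b + 1 = x then X - Polynomial.C (α (N - (b + 1)))
              else if x = b + 1 + 1 then -Polynomial.C (β (N - (b + 1)))
              else 0) * r (N - x) = 0 := by
          intro x hx
          rw [Finset.mem_range] at hx
          rw [if_neg (by omega), if_neg (by omega), if_neg (by omega), zero_mul]
        rw [Finset.sum_eq_zero hzero1]
        split_ifs <;> first | omega | contradiction |
          (rw [show N - b = 1 by omega, show N - (b + 1) = 0 by omega, hr0, hr1]; ring)
  -- adjugate corner entry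
  have hadj : A.adjugate (Fin.last N) 0 = 1 := by
    rw [Matrix.adjugate_apply]
    have hdet := Matrix.det_permute (finRotate (N + 1))
      (A.updateRow 0 (Pi.single (Fin.last N) 1))
    set B := ((A.updateRow 0 (Pi.single (Fin.last N) 1)).submatrix (finRotate (N + 1)) id)
      with hB
    have hBentry : ∀ p q : Fin (N + 1), B p q =
        if p = Fin.last N then (if q = Fin.last N then (1 : Polynomial F) else 0)
        else A (p + 1) q := by
      intro p q
      rw [hB]
      simp only [Matrix.submatrix_apply, finRotate_succ_apply, id]
      by_cases hp : p = Fin.last N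
      · have hp1 : p + 1 = 0 := by
          subst hp
          ext
          simp [Fin.val_add_one]
        rw [if_pos hp, hp1, Matrix.updateRow_self, Pi.single_apply]
      · have hplt : p < Fin.last N := lt_of_le_of_ne (Fin.le_last p) hp
        have hp1 : (p + 1 : Fin (N + 1)).1 = p.1 + 1 := Fin.val_add_one_of_lt hplt
        have hp1' : p + 1 ≠ 0 := by
          intro h
          rw [Fin.ext_iff] at h
          simp only [Fin.val_zero] at h
          omega
        rw [if_neg hp, Matrix.updateRow_ne hp1']
    have hval : ∀ p : Fin (N + 1), p ≠ Fin.last N → (p + 1 : Fin (N + 1)).1 = p.1 + 1 :=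
      fun p hp => Fin.val_add_one_of_lt (lt_of_le_of_ne (Fin.le_last p) hp)
    have htri : B.BlockTriangular id := by
      intro p q hqp
      have hqp' : q.1 < p.1 := hqp
      rw [hBentry]
      by_cases hp : p = Fin.last N
      · rw [if_pos hp, if_neg]
        intro hq
        rw [hp, hq] at hqp'
        omega
      · rw [if_neg hp, hAentry]
        have := hval p hp
        have hpb : p.1 < N + 1 := p.isLt
        have hqb : q.1 < N + 1 := q.isLt
        have hpl : p.1 ≠ N := fun h => hp (Fin.ext (by simpa using h))
        split_ifs <;> first | rfl | omega
    have hdiag : ∀ p : Fin (N + 1), B p p = if p = Fin.last N then 1 else -1 := by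
      intro p
      rw [hBentry]
      by_cases hp : p = Fin.last N
      · rw [if_pos hp, if_pos hp, if_pos hp]
      · rw [if_neg hp, if_neg hp, hAentry]
        have := hval p hp
        have hpb : p.1 < N + 1 := p.isLt
        rw [if_neg (by omega), if_neg (by omega), if_neg (by omega), if_pos (by omega)]
    rw [Matrix.det_of_upperTriangular htri] at hdet
    rw [Finset.prod_congr rfl (fun p _ => hdiag p)] at hdet
    rw [Fin.prod_univ_castSucc] at hdet
    have hcast : ∀ p : Fin N, (if (Fin.castSucc p) = Fin.last N then (1 : Polynomial F)
        else -1) = -1 := by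
      intro p
      rw [if_neg (Fin.ne_last_of_lt (Fin.castSucc_lt_last p))]
    rw [Finset.prod_congr rfl (fun p _ => hcast p), if_pos rfl, mul_one,
      Finset.prod_const, Finset.card_univ, Fintype.card_fin, sign_finRotate] at hdet
    have hdet' : ((-1 : Polynomial F) ^ N) =
        ((-1 : Polynomial F) ^ N) * (A.updateRow 0 (Pi.single (Fin.last N) 1)).det := by
      convert hdet using 2
      simp
    have hu : ((-1 : Polynomial F) ^ N) * ((-1 : Polynomial F) ^ N) = 1 := by
      rw [← mul_pow]; norm_num
    calc (A.updateRow 0 (Pi.single (Fin.last N) 1)).det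
        = ((-1 : Polynomial F) ^ N * (-1 : Polynomial F) ^ N) *
          (A.updateRow 0 (Pi.single (Fin.last N) 1)).det := by rw [hu, one_mul]
      _ = (-1 : Polynomial F) ^ N *
          ((-1 : Polynomial F) ^ N * (A.updateRow 0 (Pi.single (Fin.last N) 1)).det) :=
          mul_assoc _ _ _
      _ = (-1 : Polynomial F) ^ N * (-1 : Polynomial F) ^ N := by rw [← hdet']
      _ = 1 := hu
  -- put it together
  have h2 : A.adjugate *ᵥ (fun i : Fin (N + 1) => if i.1 = 0 then P else 0)
      = Cmat.charpoly • v := by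
    rw [← hAv, Matrix.mulVec_mulVec, Matrix.adjugate_mul, Matrix.charpoly,
      Matrix.smul_mulVec, Matrix.one_mulVec]
  have h3 := congrFun h2 (Fin.last N)
  have hL : (A.adjugate *ᵥ fun i : Fin (N + 1) => if i.1 = 0 then P else 0) (Fin.last N)
      = A.adjugate (Fin.last N) 0 * P := by
    simp only [Matrix.mulVec, dotProduct]
    rw [Finset.sum_eq_single (0 : Fin (N + 1))]
    · simp
    · intro b _ hb
      rw [if_neg, mul_zero]
      exact fun h => hb (Fin.ext (by simpa using h))
    · simp
  have hR : (Cmat.charpoly • v) (Fin.last N) = Cmat.charpoly := by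
    simp [hv, hr0]
  rw [hL, hR, hadj, one_mul] at h3
  exact h3.symm
end
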